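/- Gradient displacement bound for 1-self-concordant functions: let f be a nondegenerate 1-self-concordant function (its Hessian is positive definite on its domain). For every x and y in the domain of f with r := ‖x − y‖_{f''(x)} < 1, one has ‖f'(x) − f'(y)‖_{[f''(x)]^{−1}} ≤ r/(1 − r). -/

import Mathlib

open Matrix Filter

noncomputable section

/-- Gradient of `f : ℝ^m → ℝ` (vector of partial derivatives). -/
def vgrad {m : ℕ} (f : (Fin m → ℝ) → ℝ) (x : Fin m → ℝ) : Fin m → ℝ :=
  fun i => fderiv ℝ f x (Pi.single i 1)

/-- Hessian matrix of `f : ℝ^m → ℝ`. -/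
def vhess {m : ℕ} (f : (Fin m → ℝ) → ℝ) (x : Fin m → ℝ) : Matrix (Fin m) (Fin m) ℝ :=
  Matrix.of fun i j => iteratedFDeriv ℝ 2 f x ![Pi.single i 1, Pi.single j 1]

/-- `f` is an `a`-self-concordant function with (open convex) domain `Q`. -/
def IsSelfConcordant {E : Type*} [NormedAddCommGroup E] [NormedSpace ℝ E]
    (a : ℝ) (Q : Set E) (f : E → ℝ) : Prop :=
  0 < a ∧ IsOpen Q ∧ Convex ℝ Q ∧ Q.Nonempty ∧ ContDiffOn ℝ 3 f Q ∧ ConvexOn ℝ Q f ∧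
  (∀ (x : ℕ → E) (z : E), (∀ i, x i ∈ Q) → z ∈ frontier Q →
      Tendsto x atTop (nhds z) → Tendsto (fun i => f (x i)) atTop atTop) ∧
  (∀ x ∈ Q, ∀ h : E, |iteratedFDeriv ℝ 3 f x ![h, h, h]| ≤
      2 * a ^ (-(1:ℝ)/2) * (iteratedFDeriv ℝ 2 f x ![h, h]) ^ ((3:ℝ)/2))

/-- `f` is a `ϑ`-self-concordant barrier with (open convex) domain `Q`. -/
def IsSCBarrier {E : Type*} [NormedAddCommGroup E] [NormedSpace ℝ E]
    (ϑ : ℝ) (Q : Set E) (f : E → ℝ) : Prop :=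
  IsSelfConcordant 1 Q f ∧ 1 ≤ ϑ ∧
  ∀ x ∈ Q, ∀ h : E, |fderiv ℝ f x h| ≤
      ϑ ^ ((1:ℝ)/2) * (iteratedFDeriv ℝ 2 f x ![h, h]) ^ ((1:ℝ)/2)

/-- Legendre–Fenchel conjugate of `f` (with essential domain `Q`). -/
def LFconj {m : ℕ} (Q : Set (Fin m → ℝ)) (f : (Fin m → ℝ) → ℝ) (y : Fin m → ℝ) : ℝ :=
  sSup ((fun x => y ⬝ᵥ x - f x) '' Q)

/-- Recession cone of `D`. -/
def recCone {m : ℕ} (D : Set (Fin m → ℝ)) : Set (Fin m → ℝ) :=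
  {h | ∀ z ∈ D, ∀ t : ℝ, 0 ≤ t → z + t • h ∈ D}

/-- `D_* = {y : ⟨y,h⟩ ≤ 0 for all h in the recession cone of D}`. -/
def dualSet {m : ℕ} (D : Set (Fin m → ℝ)) : Set (Fin m → ℝ) :=
  {y | ∀ h ∈ recCone D, y ⬝ᵥ h ≤ 0}

/-- Support function `δ_*(y|D)`, with values in `EReal`. -/
def suppF {m : ℕ} (D : Set (Fin m → ℝ)) (y : Fin m → ℝ) : EReal :=
  ⨆ z ∈ D, ((y ⬝ᵥ z : ℝ) : EReal)

/-- `ρ(t) = t - ln(1+t)` for `t > -1`, `+∞` otherwise. -/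
def rho (t : ℝ) : EReal :=
  if -1 < t then ((t - Real.log (1 + t) : ℝ) : EReal) else ⊤

/-- `‖v‖_B = ⟨Bv,v⟩^{1/2}`. -/
def Bnorm {ι : Type*} [Fintype ι] (B : Matrix ι ι ℝ) (v : ι → ℝ) : ℝ :=
  Real.sqrt (B.mulVec v ⬝ᵥ v)

/-- Loewner order `A ⪯ B`. -/
def loewnerLE {ι : Type*} [Fintype ι] (A B : Matrix ι ι ℝ) : Prop := (B - A).PosSemidef

/-- `u = Ax + (1/τ) z⁰`. -/
def uOf {m n : ℕ} (A : Matrix (Fin m) (Fin n) ℝ) (z0 : Fin m → ℝ)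
    (x : Fin n → ℝ) (τ : ℝ) : Fin m → ℝ := A.mulVec x + τ⁻¹ • z0

/-- Membership in `Q_DD`. -/
def InQDD {m n : ℕ} (A : Matrix (Fin m) (Fin n) ℝ) (c : Fin n → ℝ)
    (Dom : Set (Fin m → ℝ)) (z0 y0 : Fin m → ℝ)
    (x : Fin n → ℝ) (τ : ℝ) (y : Fin m → ℝ) : Prop :=
  uOf A z0 x τ ∈ Dom ∧ 0 < τ ∧
  Aᵀ.mulVec y - Aᵀ.mulVec y0 = -((τ - 1) • c) ∧
  y ∈ interior (dualSet (closure Dom))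

/-- `μ(x,τ,y)`. -/
def muOf {m n : ℕ} (A : Matrix (Fin m) (Fin n) ℝ) (c : Fin n → ℝ)
    (ξ ϑ : ℝ) (z0 : Fin m → ℝ) (yτ0 : ℝ)
    (x : Fin n → ℝ) (τ : ℝ) (y : Fin m → ℝ) : ℝ :=
  (τ / (ξ * ϑ)) * (-yτ0 - τ * (c ⬝ᵥ x) - y ⬝ᵥ uOf A z0 x τ)

/-- Proximity measure `Ω_μ(x,τ,y)`. -/
def OmegaOf {m n : ℕ} (A : Matrix (Fin m) (Fin n) ℝ) (Dom : Set (Fin m → ℝ))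
    (Φ : (Fin m → ℝ) → ℝ) (z0 : Fin m → ℝ) (μ : ℝ)
    (x : Fin n → ℝ) (τ : ℝ) (y : Fin m → ℝ) : ℝ :=
  Φ (uOf A z0 x τ) + LFconj Dom Φ ((τ / μ) • y) - (τ / μ) * (y ⬝ᵥ uOf A z0 x τ)

/-- The central-path system `(CP_μ)`. -/
def CP {m n : ℕ} (A : Matrix (Fin m) (Fin n) ℝ) (c : Fin n → ℝ)
    (Dom : Set (Fin m → ℝ)) (Φ : (Fin m → ℝ) → ℝ) (ξ ϑ : ℝ)
    (z0 y0 : Fin m → ℝ) (yτ0 μ : ℝ)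
    (x : Fin n → ℝ) (τ : ℝ) (y : Fin m → ℝ) : Prop :=
  InQDD A c Dom z0 y0 x τ y ∧
  y = (μ / τ) • vgrad Φ (uOf A z0 x τ) ∧
  c ⬝ᵥ x + τ⁻¹ * (y ⬝ᵥ uOf A z0 x τ) = -(ξ * ϑ * μ) / τ ^ 2 - yτ0 / τ

/-- The `(m+1)×(m+1)` matrix `H̄` as a function of `u` and `τ`. -/
def HbarU {m : ℕ} (Φ : (Fin m → ℝ) → ℝ) (ξ ϑ : ℝ) (u : Fin m → ℝ) (τ : ℝ) :
    Matrix (Fin m ⊕ Unit) (Fin m ⊕ Unit) ℝ :=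
  Matrix.of fun i j =>
    match i, j with
    | Sum.inl i, Sum.inl j => (1 / τ ^ 2) * vhess Φ u i j
    | Sum.inl i, Sum.inr _ =>
        (-((1 / τ ^ 2) • (vhess Φ u).mulVec u) - (1 / τ ^ 2) • vgrad Φ u) i
    | Sum.inr _, Sum.inl j =>
        (-((1 / τ ^ 2) • (vhess Φ u).mulVec u) - (1 / τ ^ 2) • vgrad Φ u) j
    | Sum.inr _, Sum.inr _ =>
        (2 / τ ^ 2) * (vgrad Φ u ⬝ᵥ u) + (1 / τ ^ 2) * (u ⬝ᵥ (vhess Φ u).mulVec u)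
          + ξ * ϑ / τ ^ 2

/-- `H̄(x,τ)` with `u = Ax + (1/τ)z⁰`. -/
def HbarX {m n : ℕ} (A : Matrix (Fin m) (Fin n) ℝ) (Φ : (Fin m → ℝ) → ℝ)
    (ξ ϑ : ℝ) (z0 : Fin m → ℝ) (x : Fin n → ℝ) (τ : ℝ) :
    Matrix (Fin m ⊕ Unit) (Fin m ⊕ Unit) ℝ :=
  HbarU Φ ξ ϑ (uOf A z0 x τ) τ

/-- `𝓗(H1, H2) = blockdiag(H1, H2⁻¹)`. -/
def calH {ι : Type*} [Fintype ι] [DecidableEq ι] (H1 H2 : Matrix ι ι ℝ) :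
    Matrix (ι ⊕ ι) (ι ⊕ ι) ℝ :=
  Matrix.fromBlocks H1 0 0 H2⁻¹

/-- The rows of `B` form a basis of the kernel of `v ↦ M v`. -/
def rowsBasisOfKernel {σ ι κ : Type*} [Fintype σ] [Fintype ι] [Fintype κ]
    (B : Matrix σ ι ℝ) (M : Matrix κ ι ℝ) : Prop :=
  LinearIndependent ℝ (fun s => B s) ∧
  Submodule.span ℝ (Set.range fun s => B s) = LinearMap.ker M.mulVecLin

/-- The `(2m+2)×(m+1)` matrix `U` with block rows `[A,0,0], [0,1,0], [0,-c_A,-Fᵀ], [cᵀ,0,0]`. -/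
def matU {m n p : ℕ} (A : Matrix (Fin m) (Fin n) ℝ) (c : Fin n → ℝ)
    (cA : Fin m → ℝ) (F : Matrix (Fin p) (Fin m) ℝ) :
    Matrix ((Fin m ⊕ Unit) ⊕ (Fin m ⊕ Unit)) (Fin n ⊕ (Unit ⊕ Fin p)) ℝ :=
  Matrix.of fun i j =>
    match i, j with
    | Sum.inl (Sum.inl i), Sum.inl j => A i j
    | Sum.inl (Sum.inl _), Sum.inr _ => 0
    | Sum.inl (Sum.inr _), Sum.inr (Sum.inl _) => 1
    | Sum.inl (Sum.inr _), _ => 0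
    | Sum.inr (Sum.inl _), Sum.inl _ => 0
    | Sum.inr (Sum.inl i), Sum.inr (Sum.inl _) => -cA i
    | Sum.inr (Sum.inl i), Sum.inr (Sum.inr k) => -F k i
    | Sum.inr (Sum.inr _), Sum.inl j => c j
    | Sum.inr (Sum.inr _), Sum.inr _ => 0

/-- The vector `r⁰`. -/
def r0vec {m n p : ℕ} (A : Matrix (Fin m) (Fin n) ℝ) (c : Fin n → ℝ)
    (cA : Fin m → ℝ) (F : Matrix (Fin p) (Fin m) ℝ)
    (y0 z0 : Fin m → ℝ) (yτ0 : ℝ) : Fin n ⊕ (Unit ⊕ Fin p) → ℝ :=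
  Sum.elim (fun j => -(Aᵀ.mulVec y0) j - c j)
    (Sum.elim (fun _ => -yτ0 + cA ⬝ᵥ z0) (fun k => F.mulVec z0 k))

/-- The vector `ψ^p`. -/
def psiP {m : ℕ} (Φ : (Fin m → ℝ) → ℝ) (ξ ϑ : ℝ) (u : Fin m → ℝ) (τ μ : ℝ) :
    (Fin m ⊕ Unit) ⊕ (Fin m ⊕ Unit) → ℝ :=
  Sum.elim
    (Sum.elim (fun i => (1 / τ) * vgrad Φ u i)
      (fun _ => -(1 / τ) * (vgrad Φ u ⬝ᵥ u) - ξ * ϑ / τ))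
    (Sum.elim (fun i => (τ / μ) * u i) (fun _ => τ / μ))

/-- The vector `ψ^c`; here `Φs` is the LF conjugate of `Φ` and `s = y_{τ,0} + τ⟨c,x⟩`. -/
def psiC {m : ℕ} (Φ Φs : (Fin m → ℝ) → ℝ) (u y : Fin m → ℝ) (τ μ s : ℝ) :
    (Fin m ⊕ Unit) ⊕ (Fin m ⊕ Unit) → ℝ :=
  Sum.elim
    (Sum.elim (fun i => (1 / τ) * vgrad Φ u i)
      (fun _ => -(1 / τ) * (vgrad Φ u ⬝ᵥ u) + (1 / μ) * (y ⬝ᵥ vgrad Φs ((τ / μ) • y))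
        + (1 / μ) * s))
    (Sum.elim (fun i => (τ / μ) * vgrad Φs ((τ / μ) • y) i) (fun _ => τ / μ))

end


set_option maxHeartbeats 1000000
open Real
noncomputable section SCAuxSec
namespace SCAux

/-- cubic form values -/
def qcub (P Q R S co si : ℝ) : ℝ := P*co^3 + 3*Q*co^2*si + 3*R*co*si^2 + S*si^3

lemma nu_sum (c s r : ℝ) (h1 : s^2 = 1 - c^2) (h2 : r^2 = 3) :
    (4/3)*(c^2 - s^2 + 1/2)^2 + (4/3)*((c^2 - s^2)/2 + c*s*r - 1/2)^2
      + (4/3)*((c^2 - s^2)/2 - c*s*r - 1/2)^2 = 3 := by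
  linear_combination ((2 : ℝ) + (2 : ℝ)*s^2 + (-6 : ℝ)*c^2 + (8/3 : ℝ)*c^2*r^2) * h1 + ((8/3 : ℝ)*c^2 + (-8/3 : ℝ)*c^4) * h2

lemma cert_poly (P Q R S c s r : ℝ) (h1 : s^2 = 1 - c^2) (h2 : r^2 = 3) :
    (4/3)*(c^2 - s^2 + 1/2)^2 * qcub P Q R S c s
      - (4/3)*((c^2 - s^2)/2 + c*s*r - 1/2)^2
          * qcub P Q R S (c*(1/2) - s*(r/2)) (s*(1/2) + c*(r/2))
      + (4/3)*((c^2 - s^2)/2 - c*s*r - 1/2)^2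
          * qcub P Q R S ((c*(1/2) - s*(r/2))*(1/2) - (s*(1/2) + c*(r/2))*(r/2))
              ((s*(1/2) + c*(r/2))*(1/2) + (c*(1/2) - s*(r/2))*(r/2))
      = 3*(4*c^3 - 3*c)*P + 3*(3*s - 4*s^3)*Q := by
  unfold qcub
  linear_combination ((3/16 : ℝ)*s*S + (12 : ℝ)*s*Q + (3/8 : ℝ)*s*r*R + (-1/16 : ℝ)*s*r^2*S + (-1/4 : ℝ)*s*r^2*Q + (1/4 : ℝ)*s*r^3*R + (1/16 : ℝ)*s*r^4*S + (-1/4 : ℝ)*s*r^4*Q + (-1/8 : ℝ)*s*r^5*R + (-1/48 : ℝ)*s*r^6*S + (-7/64 : ℝ)*s^3*S + (9/32 : ℝ)*s^3*r*R + (-3/64 : ℝ)*s^3*r^2*S + (-3/16 : ℝ)*s^3*r^2*Q + (3/16 : ℝ)*s^3*r^3*R + (3/64 : ℝ)*s^3*r^4*S + (-3/16 : ℝ)*s^3*r^4*Q + (-3/32 : ℝ)*s^3*r^5*R + (-1/64 : ℝ)*s^3*r^6*S + (83/64 : ℝ)*s^5*S + (3/32 : ℝ)*s^5*r*R + (-1/64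 : ℝ)*s^5*r^2*S + (-1/16 : ℝ)*s^5*r^2*Q + (1/16 : ℝ)*s^5*r^3*R + (1/64 : ℝ)*s^5*r^4*S + (-1/16 : ℝ)*s^5*r^4*Q + (-1/32 : ℝ)*s^5*r^5*R + (-1/192 : ℝ)*s^5*r^6*S + (9/16 : ℝ)*c*R + (3/4 : ℝ)*c*r*Q + (-15/16 : ℝ)*c*r^2*R + (-1/4 : ℝ)*c*r^2*P + (-3/8 : ℝ)*c*r^3*S + (2 : ℝ)*c*r^3*Q + (19/16 : ℝ)*c*r^4*R + (-11/12 : ℝ)*c*r^4*P + (1/4 : ℝ)*c*r^5*S + (-3/4 : ℝ)*c*r^5*Q + (-5/16 : ℝ)*c*r^6*R + (-1/24 : ℝ)*c*r^7*S + (-21/64 : ℝ)*c*s^2*R + (3/32 : ℝ)*c*s^2*r*S + (9/16 : ℝ)*c*s^2*r*Q + (-65/64 : ℝ)*c*s^2*r^2*R + (-3/16 : ℝ)*c*s^2*r^2*P + (-5/16 : ℝ)*c*s^2*r^3*S + (15/8 : ℝ)*c*s^2*r^3*Q + (65/64 : ℝ)*c*s^2*r^4*R + (-41/48 : ℝ)*c*s^2*r^4*P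 + (7/32 : ℝ)*c*s^2*r^5*S + (-11/16 : ℝ)*c*s^2*r^5*Q + (-19/64 : ℝ)*c*s^2*r^6*R + (-1/24 : ℝ)*c*s^2*r^7*S + (249/64 : ℝ)*c*s^4*R + (3/32 : ℝ)*c*s^4*r*S + (3/16 : ℝ)*c*s^4*r*Q + (-35/64 : ℝ)*c*s^4*r^2*R + (-1/16 : ℝ)*c*s^4*r^2*P + (-1/8 : ℝ)*c*s^4*r^3*S + (7/8 : ℝ)*c*s^4*r^3*Q + (27/64 : ℝ)*c*s^4*r^4*R + (-19/48 : ℝ)*c*s^4*r^4*P + (3/32 : ℝ)*c*s^4*r^5*S + (-5/16 : ℝ)*c*s^4*r^5*Q + (-9/64 : ℝ)*c*s^4*r^6*R + (-1/48 : ℝ)*c*s^4*r^7*S + (-19/8 : ℝ)*c^2*s*S + (-21/64 : ℝ)*c^2*s*Q + (-3/16 : ℝ)*c^2*s*r*R + (9/32 : ℝ)*c^2*s*r*P + (25/24 : ℝ)*c^2*s*r^2*S + (-113/64 : ℝ)*c^2*s*r^2*Q + (-31/8 : ℝ)*c^2*s*r^3*R + (27/16 : ℝ)*c^2*s*r^3*P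 + (-7/8 : ℝ)*c^2*s*r^4*S + (241/64 : ℝ)*c^2*s*r^4*Q + (33/16 : ℝ)*c^2*s*r^5*R + (-19/32 : ℝ)*c^2*s*r^5*P + (17/48 : ℝ)*c^2*s*r^6*S + (-51/64 : ℝ)*c^2*s*r^6*Q + (-1/4 : ℝ)*c^2*s*r^7*R + (-1/48 : ℝ)*c^2*s*r^8*S + (-249/64 : ℝ)*c^2*s^3*S + (249/64 : ℝ)*c^2*s^3*Q + (3/32 : ℝ)*c^2*s^3*r*R + (3/32 : ℝ)*c^2*s^3*r*P + (89/192 : ℝ)*c^2*s^3*r^2*S + (-63/64 : ℝ)*c^2*s^3*r^2*Q + (-13/8 : ℝ)*c^2*s^3*r^3*R + (13/16 : ℝ)*c^2*s^3*r^3*P + (-27/64 : ℝ)*c^2*s^3*r^4*S + (103/64 : ℝ)*c^2*s^3*r^4*Q + (35/32 : ℝ)*c^2*s^3*r^5*R + (-9/32 : ℝ)*c^2*s^3*r^5*P + (13/64 : ℝ)*c^2*s^3*r^6*S + (-33/64 : ℝ)*c^2*s^3*r^6*Q + (-3/16 : ℝ)*c^2*s^3*r^7*R + (-1/48 : ℝ)*c^2*s^3*r^8*S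 + (-57/8 : ℝ)*c^3*R + (-7/64 : ℝ)*c^3*P + (-21/32 : ℝ)*c^3*r*Q + (15/4 : ℝ)*c^3*r^2*R + (-51/64 : ℝ)*c^3*r^2*P + (15/8 : ℝ)*c^3*r^3*S + (-109/16 : ℝ)*c^3*r^3*Q + (-21/4 : ℝ)*c^3*r^4*R + (409/192 : ℝ)*c^3*r^4*P + (-5/4 : ℝ)*c^3*r^5*S + (111/32 : ℝ)*c^3*r^5*Q + (29/16 : ℝ)*c^3*r^6*R + (-33/64 : ℝ)*c^3*r^6*P + (5/24 : ℝ)*c^3*r^7*S + (-3/8 : ℝ)*c^3*r^7*Q + (-1/16 : ℝ)*c^3*r^8*R + (-747/64 : ℝ)*c^3*s^2*R + (83/64 : ℝ)*c^3*s^2*P + (-3/32 : ℝ)*c^3*s^2*r*S + (-3/32 : ℝ)*c^3*s^2*r*Q + (113/64 : ℝ)*c^3*s^2*r^2*R + (-29/64 : ℝ)*c^3*s^2*r^2*P + (11/16 : ℝ)*c^3*s^2*r^3*S + (-23/8 : ℝ)*c^3*s^2*r^3*Q + (-145/64 : ℝ)*c^3*s^2*r^4*R + (167/192 : ℝ)*c^3*s^2*r^4*P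 + (-23/32 : ℝ)*c^3*s^2*r^5*S + (61/32 : ℝ)*c^3*s^2*r^5*Q + (79/64 : ℝ)*c^3*s^2*r^6*R + (-73/192 : ℝ)*c^3*s^2*r^6*P + (1/6 : ℝ)*c^3*s^2*r^7*S + (-5/16 : ℝ)*c^3*s^2*r^7*Q + (-1/16 : ℝ)*c^3*s^2*r^8*R + (83/16 : ℝ)*c^4*s*S + (-747/64 : ℝ)*c^4*s*Q + (-3/16 : ℝ)*c^4*s*r*R + (-3/32 : ℝ)*c^4*s*r*P + (-47/48 : ℝ)*c^4*s*r^2*S + (141/64 : ℝ)*c^4*s*r^2*Q + (29/8 : ℝ)*c^4*s*r^3*R + (-11/8 : ℝ)*c^4*s*r^3*P + (43/48 : ℝ)*c^4*s*r^4*S + (-221/64 : ℝ)*c^4*s*r^4*Q + (-43/16 : ℝ)*c^4*s*r^5*R + (29/32 : ℝ)*c^4*s*r^5*P + (-7/12 : ℝ)*c^4*s*r^6*S + (103/64 : ℝ)*c^4*s*r^6*Q + (1/2 : ℝ)*c^4*s*r^7*R + (-7/48 : ℝ)*c^4*s*r^7*P + (1/48 : ℝ)*c^4*s*r^8*S + (-1/16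 : ℝ)*c^4*s*r^8*Q + (249/16 : ℝ)*c^5*R + (-249/64 : ℝ)*c^5*P + (-3/32 : ℝ)*c^5*r*Q + (-45/16 : ℝ)*c^5*r^2*R + (173/192 : ℝ)*c^5*r^2*P + (-3/2 : ℝ)*c^5*r^3*S + (71/16 : ℝ)*c^5*r^3*Q + (61/16 : ℝ)*c^5*r^4*R + (-245/192 : ℝ)*c^5*r^4*P + (1 : ℝ)*c^5*r^5*S + (-95/32 : ℝ)*c^5*r^5*Q + (-7/4 : ℝ)*c^5*r^6*R + (37/64 : ℝ)*c^5*r^6*P + (-1/6 : ℝ)*c^5*r^7*S + (1/2 : ℝ)*c^5*r^7*Q + (1/16 : ℝ)*c^5*r^8*R + (-1/48 : ℝ)*c^5*r^8*P) * h1 + ((-1/16 : ℝ)*s*S + (-1 : ℝ)*s*Q + (-1/8 : ℝ)*s*r*R + (-1/4 : ℝ)*s*r^2*Q + (-1/8 : ℝ)*s*r^3*R + (-1/48 : ℝ)*s*r^4*S + (-3/16 : ℝ)*c*R + (-3 : ℝ)*c*P + (-1/4 : ℝ)*c*r*Q + (1/4 : ℝ)*c*r^2*R + (-11/12 : ℝ)*c*r^2*P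 + (1/8 : ℝ)*c*r^3*S + (-3/4 : ℝ)*c*r^3*Q + (-5/16 : ℝ)*c*r^4*R + (-1/24 : ℝ)*c*r^5*S + (41/48 : ℝ)*c^2*s*S + (61/16 : ℝ)*c^2*s*Q + (1/4 : ℝ)*c^2*s*r*R + (-1/8 : ℝ)*c^2*s*r*P + (-1/16 : ℝ)*c^2*s*r^2*S + (7/4 : ℝ)*c^2*s*r^2*Q + (3/2 : ℝ)*c^2*s*r^3*R + (-5/8 : ℝ)*c^2*s*r^3*P + (5/16 : ℝ)*c^2*s*r^4*S + (-13/16 : ℝ)*c^2*s*r^4*Q + (-1/4 : ℝ)*c^2*s*r^5*R + (-1/48 : ℝ)*c^2*s*r^6*S + (41/16 : ℝ)*c^3*R + (63/16 : ℝ)*c^3*P + (1/2 : ℝ)*c^3*r*Q + (-11/16 : ℝ)*c^3*r^2*R + (3/2 : ℝ)*c^3*r^2*P + (-3/4 : ℝ)*c^3*r^3*S + (25/8 : ℝ)*c^3*r^3*Q + (31/16 : ℝ)*c^3*r^4*R + (-25/48 : ℝ)*c^3*r^4*P + (1/4 : ℝ)*c^3*r^5*S + (-3/8 : ℝ)*c^3*r^5*Q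 + (-1/16 : ℝ)*c^3*r^6*R + (-121/48 : ℝ)*c^4*s*S + (19/8 : ℝ)*c^4*s*Q + (-1/8 : ℝ)*c^4*s*r*R + (1/8 : ℝ)*c^4*s*r*P + (-5/24 : ℝ)*c^4*s*r^2*S + (-11/16 : ℝ)*c^4*s*r^2*Q + (-23/8 : ℝ)*c^4*s*r^3*R + (9/8 : ℝ)*c^4*s*r^3*P + (-13/16 : ℝ)*c^4*s*r^4*S + (19/8 : ℝ)*c^4*s*r^4*Q + (3/4 : ℝ)*c^4*s*r^5*R + (-1/6 : ℝ)*c^4*s*r^5*P + (1/24 : ℝ)*c^4*s*r^6*S + (-1/16 : ℝ)*c^4*s*r^6*Q + (-121/16 : ℝ)*c^5*R + (19/24 : ℝ)*c^5*P + (-1/4 : ℝ)*c^5*r*Q + (-3/8 : ℝ)*c^5*r^2*R + (-5/16 : ℝ)*c^5*r^2*P + (9/8 : ℝ)*c^5*r^3*S + (-31/8 : ℝ)*c^5*r^3*Q + (-51/16 : ℝ)*c^5*r^4*R + (25/24 : ℝ)*c^5*r^4*P + (-3/8 : ℝ)*c^5*r^5*S + (7/8 : ℝ)*c^5*r^5*Q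 + (1/8 : ℝ)*c^5*r^6*R + (-1/48 : ℝ)*c^5*r^6*P + (83/48 : ℝ)*c^6*s*S + (-83/16 : ℝ)*c^6*s*Q + (13/48 : ℝ)*c^6*s*r^2*S + (-13/16 : ℝ)*c^6*s*r^2*Q + (3/2 : ℝ)*c^6*s*r^3*R + (-1/2 : ℝ)*c^6*s*r^3*P + (25/48 : ℝ)*c^6*s*r^4*S + (-25/16 : ℝ)*c^6*s*r^4*Q + (-1/2 : ℝ)*c^6*s*r^5*R + (1/6 : ℝ)*c^6*s*r^5*P + (-1/48 : ℝ)*c^6*s*r^6*S + (1/16 : ℝ)*c^6*s*r^6*Q + (83/16 : ℝ)*c^7*R + (-83/48 : ℝ)*c^7*P + (13/16 : ℝ)*c^7*r^2*R + (-13/48 : ℝ)*c^7*r^2*P + (-1/2 : ℝ)*c^7*r^3*S + (3/2 : ℝ)*c^7*r^3*Q + (25/16 : ℝ)*c^7*r^4*R + (-25/48 : ℝ)*c^7*r^4*P + (1/6 : ℝ)*c^7*r^5*S + (-1/2 : ℝ)*c^7*r^5*Q + (-1/16 : ℝ)*c^7*r^6*R + (1/48 : ℝ)*c^7*r^6*P)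 * h2





lemma exists_angle (cφ sφ : ℝ) (h : cφ^2 + sφ^2 = 1) :
    ∃ φ : ℝ, Real.cos φ = cφ ∧ Real.sin φ = sφ := by
  have hns : Complex.normSq ⟨cφ, sφ⟩ = 1 := by
    rw [Complex.normSq_mk]; nlinarith
  have habs : ‖(⟨cφ, sφ⟩ : ℂ)‖ = 1 := by
    rw [Complex.norm_def, hns, Real.sqrt_one]
  have hz0 : (⟨cφ, sφ⟩ : ℂ) ≠ 0 := by
    intro hz; rw [hz] at habs; simp at habs
  refine ⟨Complex.arg ⟨cφ, sφ⟩, ?_, ?_⟩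
  · rw [Complex.cos_arg hz0, habs]; simp
  · rw [Complex.sin_arg, habs]; simp

lemma combo_bound (ν₀ ν₁ ν₂ a b c X : ℝ) (h0 : 0 ≤ ν₀) (h1 : 0 ≤ ν₁) (h2 : 0 ≤ ν₂)
    (ha : |a| ≤ 2) (hb : |b| ≤ 2) (hc : |c| ≤ 2) (hsum : ν₀ + ν₁ + ν₂ = 3)
    (hX : 3*X = ν₀*a - ν₁*b + ν₂*c) : |X| ≤ 2 := by
  rw [abs_le] at *
  obtain ⟨ha1, ha2⟩ := ha; obtain ⟨hb1, hb2⟩ := hb; obtain ⟨hc1, hc2⟩ := hc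
  constructor <;> nlinarith [mul_nonneg h0 (by linarith : (0:ℝ) ≤ 2 - a),
    mul_nonneg h0 (by linarith : (0:ℝ) ≤ 2 + a),
    mul_nonneg h1 (by linarith : (0:ℝ) ≤ 2 - b),
    mul_nonneg h1 (by linarith : (0:ℝ) ≤ 2 + b),
    mul_nonneg h2 (by linarith : (0:ℝ) ≤ 2 - c),
    mul_nonneg h2 (by linarith : (0:ℝ) ≤ 2 + c)]

/-- Key scalar lemma: Banach-type bound for 2D cubic forms. -/
lemma scalar_mixed (P Q R S cφ sφ : ℝ) (hunit : cφ^2 + sφ^2 = 1)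
    (hq : ∀ co si : ℝ, co^2 + si^2 = 1 → |qcub P Q R S co si| ≤ 2) :
    |cφ*P + sφ*Q| ≤ 2 := by
  obtain ⟨φ, hcφ, hsφ⟩ := exists_angle cφ sφ hunit
  have h1 : Real.sin (φ/3) ^ 2 = 1 - Real.cos (φ/3) ^ 2 := Real.sin_sq _
  have h2 : Real.sqrt 3 ^ 2 = 3 := Real.sq_sqrt (by norm_num)
  set c : ℝ := Real.cos (φ/3)
  set s : ℝ := Real.sin (φ/3)
  set r : ℝ := Real.sqrt 3
  have hc3 : cφ = 4*c^3 - 3*c := by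
    rw [← hcφ, show φ = 3 * (φ/3) by ring, Real.cos_three_mul]
  have hs3 : sφ = 3*s - 4*s^3 := by
    rw [← hsφ, show φ = 3 * (φ/3) by ring, Real.sin_three_mul]
  have e1c : c*(1/2) - s*(r/2) = Real.cos (φ/3 + π/3) := by
    rw [Real.cos_add, Real.cos_pi_div_three, Real.sin_pi_div_three]
  have e1s : s*(1/2) + c*(r/2) = Real.sin (φ/3 + π/3) := by
    rw [Real.sin_add, Real.cos_pi_div_three, Real.sin_pi_div_three]
  have e2c : (c*(1/2) - s*(r/2))*(1/2) - (s*(1/2) + c*(r/2))*(r/2)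
      = Real.cos (φ/3 + π/3 + π/3) := by
    rw [Real.cos_add (φ/3 + π/3), Real.cos_pi_div_three, Real.sin_pi_div_three, ← e1c, ← e1s]
  have e2s : (s*(1/2) + c*(r/2))*(1/2) + (c*(1/2) - s*(r/2))*(r/2)
      = Real.sin (φ/3 + π/3 + π/3) := by
    rw [Real.sin_add (φ/3 + π/3), Real.cos_pi_div_three, Real.sin_pi_div_three, ← e1c, ← e1s]
  have key := cert_poly P Q R S c s r h1 h2
  have hsum := nu_sum c s r h1 h2
  have hq0 : |qcub P Q R S c s| ≤ 2 := hq c s (by nlinarith)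
  have hq1 : |qcub P Q R S (c*(1/2) - s*(r/2)) (s*(1/2) + c*(r/2))| ≤ 2 := by
    rw [e1c, e1s]; exact hq _ _ (by rw [add_comm]; exact Real.sin_sq_add_cos_sq _)
  have hq2 : |qcub P Q R S ((c*(1/2) - s*(r/2))*(1/2) - (s*(1/2) + c*(r/2))*(r/2))
      ((s*(1/2) + c*(r/2))*(1/2) + (c*(1/2) - s*(r/2))*(r/2))| ≤ 2 := by
    rw [e2c, e2s]; exact hq _ _ (by rw [add_comm]; exact Real.sin_sq_add_cos_sq _)
  refine combo_bound _ _ _ _ _ _ _ (by positivity) (by positivity) (by positivity)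
    hq0 hq1 hq2 hsum ?_
  rw [hc3, hs3]; linarith [key]


end SCAux
end SCAuxSec

section MixedBound

variable {V : Type*} [AddCommGroup V] [Module ℝ V]
variable (B : V → V → ℝ) (T : V → V → V → ℝ)

/-- Mixed third-derivative bound from the diagonal bound (Banach's theorem, 2D case). -/
lemma mixed_bound
    (hBa : ∀ u v w : V, B (u+v) w = B u w + B v w)
    (hBs : ∀ (a:ℝ) (u v : V), B (a•u) v = a * B u v)
    (hBsym : ∀ u v : V, B u v = B v u)
    (hBpd : ∀ v : V, v ≠ 0 → 0 < B v v)
    (hTa : ∀ x x' y z : V, T (x+x') y z = T x y z + T x' y z)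
    (hTs : ∀ (a:ℝ) (x y z : V), T (a•x) y z = a * T x y z)
    (hT12 : ∀ x y z : V, T x y z = T y x z)
    (hT23 : ∀ x y z : V, T x y z = T x z y)
    (hdiag : ∀ v : V, |T v v v| ≤ 2 * (B v v) ^ ((3:ℝ)/2))
    (h w : V) :
    |T h w w| ≤ 2 * Real.sqrt (B h h) * B w w := by
  have hB0 : ∀ x : V, B 0 x = 0 := by
    intro x; have := hBs 0 0 x; rwa [zero_smul, zero_mul] at this
  have hB0' : ∀ x : V, B x 0 = 0 := by intro x; rw [hBsym]; exact hB0 x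
  have hBa2 : ∀ u v w : V, B u (v+w) = B u v + B u w := by
    intro u v w; rw [hBsym, hBa, hBsym v, hBsym w]
  have hBs2 : ∀ (a:ℝ) (u v : V), B u (a•v) = a * B u v := by
    intro a u v; rw [hBsym, hBs, hBsym]
  have hBnn : ∀ v : V, 0 ≤ B v v := by
    intro v; by_cases hv : v = 0
    · rw [hv, hB0]
    · exact (hBpd v hv).le
  have hT0 : ∀ y z : V, T 0 y z = 0 := by
    intro y z; have := hTs 0 0 y z; rwa [zero_smul, zero_mul] at this
  have hTa2 : ∀ x y y' z : V, T x (y+y') z = T x y z + T x y' z := by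
    intro x y y' z; rw [hT12, hTa, hT12, hT12 y']
  have hTs2 : ∀ (a:ℝ) (x y z : V), T x (a•y) z = a * T x y z := by
    intro a x y z; rw [hT12, hTs, hT12]
  have hTa3 : ∀ x y z z' : V, T x y (z+z') = T x y z + T x y z' := by
    intro x y z z'; rw [hT23, hTa2, hT23, hT23 x z']
  have hTs3 : ∀ (a:ℝ) (x y z : V), T x y (a•z) = a * T x y z := by
    intro a x y z; rw [hT23, hTs2, hT23]
  by_cases hw0 : w = 0
  · rw [hw0]
    rw [hT23, hT12, hT0, hB0]
    simp [abs_nonneg]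
  by_cases hh0 : h = 0
  · rw [hh0, hT0, hB0]
    simp only [abs_zero, Real.sqrt_zero, mul_zero, zero_mul, le_refl]
  have hBw : 0 < B w w := hBpd w hw0
  have hBh : 0 < B h h := hBpd h hh0
  obtain ⟨nw, hnwdef⟩ : ∃ t : ℝ, t = Real.sqrt (B w w) := ⟨_, rfl⟩
  obtain ⟨nh, hnhdef⟩ : ∃ t : ℝ, t = Real.sqrt (B h h) := ⟨_, rfl⟩
  have hnw : 0 < nw := hnwdef ▸ Real.sqrt_pos.2 hBw
  have hnh : 0 < nh := hnhdef ▸ Real.sqrt_pos.2 hBh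
  have hnw2 : nw^2 = B w w := by rw [hnwdef]; exact Real.sq_sqrt hBw.le
  have hnh2 : nh^2 = B h h := by rw [hnhdef]; exact Real.sq_sqrt hBh.le
  obtain ⟨e₁, he₁def⟩ : ∃ e : V, e = nw⁻¹ • w := ⟨_, rfl⟩
  have he₁ : B e₁ e₁ = 1 := by
    rw [he₁def]
    simp only [hBs, hBs2]
    field_simp
    nlinarith
  have hwte : w = nw • e₁ := by
    rw [he₁def, smul_smul, mul_inv_cancel₀ hnw.ne', one_smul]
  obtain ⟨a, hadef⟩ : ∃ t : ℝ, t = B h e₁ := ⟨_, rfl⟩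
  have hBhe₁ : B h e₁ = a := hadef.symm
  have hBe₁h : B e₁ h = a := by rw [hBsym]; exact hadef.symm
  have key : ∀ e₂ : V, ∀ cφ sφ : ℝ, B e₁ e₂ = 0 → B e₂ e₂ ≤ 1 →
      cφ^2 + sφ^2 = 1 → h = (nh*cφ)•e₁ + (nh*sφ)•e₂ → |T h w w| ≤ 2 * nh * B w w := by
    intro e₂ cφ sφ hortho he₂le hunit hdecomp
    have hortho' : B e₂ e₁ = 0 := by rw [hBsym]; exact hortho
    have hBe₂nn : 0 ≤ B e₂ e₂ := hBnn e₂
    have n2 : T e₁ e₂ e₁ = T e₁ e₁ e₂ := hT23 _ _ _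
    have n1 : T e₂ e₁ e₁ = T e₁ e₁ e₂ := by rw [hT12, n2]
    have n3 : T e₂ e₁ e₂ = T e₁ e₂ e₂ := by rw [hT12]
    have n4 : T e₂ e₂ e₁ = T e₁ e₂ e₂ := by rw [hT23, n3]
    have cube : ∀ (co si : ℝ),
        T (co•e₁+si•e₂) (co•e₁+si•e₂) (co•e₁+si•e₂)
          = SCAux.qcub (T e₁ e₁ e₁) (T e₁ e₁ e₂) (T e₁ e₂ e₂) (T e₂ e₂ e₂) co si := by
      intro co si
      rw [SCAux.qcub]
      simp only [hTa, hTa2, hTa3, hTs, hTs2, hTs3, n1, n2, n3, n4]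
      ring
    have hq : ∀ co si : ℝ, co^2 + si^2 = 1 →
        |SCAux.qcub (T e₁ e₁ e₁) (T e₁ e₁ e₂) (T e₁ e₂ e₂) (T e₂ e₂ e₂) co si| ≤ 2 := by
      intro co si hcs
      rw [← cube co si]
      refine le_trans (hdiag _) ?_
      have hBv : B (co•e₁+si•e₂) (co•e₁+si•e₂) = co^2 + si^2 * B e₂ e₂ := by
        simp only [hBa, hBa2, hBs, hBs2, he₁, hortho, hortho']
        ring
      have h01 : B (co•e₁+si•e₂) (co•e₁+si•e₂) ≤ 1 := by rw [hBv]; nlinarith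
      have h00 : 0 ≤ B (co•e₁+si•e₂) (co•e₁+si•e₂) := hBnn _
      have := Real.rpow_le_one h00 h01 (by norm_num : (0:ℝ) ≤ (3:ℝ)/2)
      linarith
    have hsm := SCAux.scalar_mixed _ _ (T e₁ e₂ e₂) (T e₂ e₂ e₂) cφ sφ hunit hq
    have hThww : T h w w = (nh * nw^2) * (cφ * T e₁ e₁ e₁ + sφ * T e₁ e₁ e₂) := by
      rw [hdecomp, hwte]
      simp only [hTa, hTa2, hTa3, hTs, hTs2, hTs3, n1, n2, n3, n4]
      ring
    calc |T h w w| = (nh * nw^2) * |cφ * T e₁ e₁ e₁ + sφ * T e₁ e₁ e₂| := by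
          rw [hThww, abs_mul, abs_of_nonneg (by positivity : (0:ℝ) ≤ nh * nw^2)]
      _ ≤ (nh * nw^2) * 2 := mul_le_mul_of_nonneg_left hsm (by positivity)
      _ = 2 * nh * B w w := by rw [hnw2]; ring
  obtain ⟨u, hudef⟩ : ∃ u : V, u = h + (-a)•e₁ := ⟨_, rfl⟩
  have hBu : B u u = B h h - a^2 := by
    rw [hudef]
    simp only [hBa, hBa2, hBs, hBs2, he₁, hBhe₁, hBe₁h]
    ring
  by_cases hu0 : u = 0
  · have ha2 : a^2 = B h h := by
      have h' := hBu; rw [hu0, hB0] at h'; linarith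
    have hh' : h = a • e₁ := by
      rw [hudef] at hu0
      rw [neg_smul] at hu0
      exact add_neg_eq_zero.mp hu0
    have hdecomp : h = (nh*(a/nh))•e₁ + (nh*(0:ℝ))•(0:V) := by
      rw [mul_div_cancel₀ _ hnh.ne', mul_zero, zero_smul, add_zero]
      exact hh'
    have := key 0 (a/nh) 0 (hB0' e₁) (by rw [hB0]; norm_num)
      (by field_simp; rw [ha2, ← hnh2]; ring) hdecomp
    rwa [hnhdef] at this
  · have hBupos : 0 < B u u := hBpd u hu0
    obtain ⟨nu, hnudef⟩ : ∃ t : ℝ, t = Real.sqrt (B u u) := ⟨_, rfl⟩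
    have hnu : 0 < nu := hnudef ▸ Real.sqrt_pos.2 hBupos
    have hnu2 : nu^2 = B u u := by rw [hnudef]; exact Real.sq_sqrt hBupos.le
    have hdecomp : h = (nh*(a/nh))•e₁ + (nh*(nu/nh))•(nu⁻¹ • u) := by
      rw [mul_div_cancel₀ _ hnh.ne', mul_div_cancel₀ _ hnh.ne', smul_smul,
        mul_inv_cancel₀ hnu.ne', one_smul, hudef, neg_smul]
      abel
    have hortho : B e₁ (nu⁻¹ • u) = 0 := by
      rw [hBs2, hudef]
      simp only [hBa2, hBs2, he₁, hBe₁h]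
      ring
    have he₂1 : B (nu⁻¹ • u) (nu⁻¹ • u) ≤ 1 := by
      have hval : B (nu⁻¹ • u) (nu⁻¹ • u) = 1 := by
        rw [hBs, hBs2, ← hnu2]
        field_simp
      rw [hval]
    have hunit : (a/nh)^2 + (nu/nh)^2 = 1 := by
      field_simp
      rw [hnu2, hBu, hnh2]
      ring
    have := key (nu⁻¹ • u) (a/nh) (nu/nh) hortho he₂1 hunit hdecomp
    rwa [hnhdef] at this

end MixedBound

section CalcTools

variable {E : Type*} [NormedAddCommGroup E] [NormedSpace ℝ E]
variable {f : E → ℝ} {Q : Set E}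

lemma update_vec3 {α : Type*} (a b c v : α) : Function.update ![a,b,c] 0 v = ![v,b,c] := by
  funext i; fin_cases i <;> simp [Function.update]

lemma update_vec2 {α : Type*} (a b v : α) : Function.update ![a,b] 0 v = ![v,b] := by
  funext i; fin_cases i <;> simp [Function.update]

-- linearity of iterated derivatives in the first slot
lemma D3_add1 (f : E → ℝ) (z : E) (a a' b c : E) :
    iteratedFDeriv ℝ 3 f z ![a+a',b,c]
      = iteratedFDeriv ℝ 3 f z ![a,b,c] + iteratedFDeriv ℝ 3 f z ![a',b,c] := by
  have h0 : ∀ v : E, Function.update ![a,b,c] 0 v = ![v,b,c] := fun v => update_vec3 a b c v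
  calc iteratedFDeriv ℝ 3 f z ![a+a',b,c]
      = iteratedFDeriv ℝ 3 f z (Function.update ![a,b,c] 0 (a+a')) := by rw [h0]
    _ = iteratedFDeriv ℝ 3 f z (Function.update ![a,b,c] 0 a)
        + iteratedFDeriv ℝ 3 f z (Function.update ![a,b,c] 0 a') :=
        (iteratedFDeriv ℝ 3 f z).map_update_add ![a,b,c] 0 a a'
    _ = _ := by rw [h0, h0]

lemma D3_smul1 (f : E → ℝ) (z : E) (r : ℝ) (a b c : E) :
    iteratedFDeriv ℝ 3 f z ![r•a,b,c] = r * iteratedFDeriv ℝ 3 f z ![a,b,c] := by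
  have h0 : ∀ v : E, Function.update ![a,b,c] 0 v = ![v,b,c] := fun v => update_vec3 a b c v
  calc iteratedFDeriv ℝ 3 f z ![r•a,b,c]
      = iteratedFDeriv ℝ 3 f z (Function.update ![a,b,c] 0 (r•a)) := by rw [h0]
    _ = r • iteratedFDeriv ℝ 3 f z (Function.update ![a,b,c] 0 a) :=
        (iteratedFDeriv ℝ 3 f z).map_update_smul ![a,b,c] 0 r a
    _ = _ := by rw [h0]; simp

lemma D2_add1 (f : E → ℝ) (z : E) (a a' b : E) :
    iteratedFDeriv ℝ 2 f z ![a+a',b]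
      = iteratedFDeriv ℝ 2 f z ![a,b] + iteratedFDeriv ℝ 2 f z ![a',b] := by
  have h0 : ∀ v : E, Function.update ![a,b] 0 v = ![v,b] := fun v => update_vec2 a b v
  calc iteratedFDeriv ℝ 2 f z ![a+a',b]
      = iteratedFDeriv ℝ 2 f z (Function.update ![a,b] 0 (a+a')) := by rw [h0]
    _ = iteratedFDeriv ℝ 2 f z (Function.update ![a,b] 0 a)
        + iteratedFDeriv ℝ 2 f z (Function.update ![a,b] 0 a') :=
        (iteratedFDeriv ℝ 2 f z).map_update_add ![a,b] 0 a a'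
    _ = _ := by rw [h0, h0]

lemma D2_smul1 (f : E → ℝ) (z : E) (r : ℝ) (a b : E) :
    iteratedFDeriv ℝ 2 f z ![r•a,b] = r * iteratedFDeriv ℝ 2 f z ![a,b] := by
  have h0 : ∀ v : E, Function.update ![a,b] 0 v = ![v,b] := fun v => update_vec2 a b v
  calc iteratedFDeriv ℝ 2 f z ![r•a,b]
      = iteratedFDeriv ℝ 2 f z (Function.update ![a,b] 0 (r•a)) := by rw [h0]
    _ = r • iteratedFDeriv ℝ 2 f z (Function.update ![a,b] 0 a) :=
        (iteratedFDeriv ℝ 2 f z).map_update_smul ![a,b] 0 r a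
    _ = _ := by rw [h0]; simp

-- symmetry of the second derivative
lemma D2_symm (hQ : IsOpen Q) (hf : ContDiffOn ℝ 3 f Q) {z : E} (hz : z ∈ Q) (v w : E) :
    iteratedFDeriv ℝ 2 f z ![v,w] = iteratedFDeriv ℝ 2 f z ![w,v] := by
  have hat : ContDiffAt ℝ 3 f z := hf.contDiffAt (hQ.mem_nhds hz)
  have hsym := hat.isSymmSndFDerivAt (by norm_num)
  rw [iteratedFDeriv_two_apply, iteratedFDeriv_two_apply]
  simpa using hsym.eq v w

lemma D2_diffAt (hQ : IsOpen Q) (hf : ContDiffOn ℝ 3 f Q) {z : E} (hz : z ∈ Q) :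
    DifferentiableAt ℝ (iteratedFDeriv ℝ 2 f) z := by
  have hat : ContDiffAt ℝ 3 f z := hf.contDiffAt (hQ.mem_nhds hz)
  exact (hat.iteratedFDeriv_right (m := 1) (by norm_num)).differentiableAt (by norm_num)

lemma D3_apply_left (f : E → ℝ) (z : E) (a b c : E) :
    iteratedFDeriv ℝ 3 f z ![a,b,c] = fderiv ℝ (iteratedFDeriv ℝ 2 f) z a ![b,c] := rfl

lemma hasFDerivAt_D2_apply (hQ : IsOpen Q) (hf : ContDiffOn ℝ 3 f Q) {z : E} (hz : z ∈ Q)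
    (b c : E) :
    HasFDerivAt (fun y => iteratedFDeriv ℝ 2 f y ![b,c])
      ((ContinuousMultilinearMap.apply ℝ (fun _ : Fin 2 => E) ℝ ![b,c]).comp
        (fderiv ℝ (iteratedFDeriv ℝ 2 f) z)) z :=
  (ContinuousMultilinearMap.apply ℝ (fun _ : Fin 2 => E) ℝ ![b,c]).hasFDerivAt.comp z
    (D2_diffAt hQ hf hz).hasFDerivAt

lemma D3_symm23 (hQ : IsOpen Q) (hf : ContDiffOn ℝ 3 f Q) {z : E} (hz : z ∈ Q) (a b c : E) :
    iteratedFDeriv ℝ 3 f z ![a,b,c] = iteratedFDeriv ℝ 3 f z ![a,c,b] := by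
  have h1 := hasFDerivAt_D2_apply hQ hf hz b c
  have heq : (fun y => iteratedFDeriv ℝ 2 f y ![c,b])
      =ᶠ[nhds z] (fun y => iteratedFDeriv ℝ 2 f y ![b,c]) := by
    filter_upwards [hQ.mem_nhds hz] with y hy
    exact D2_symm hQ hf hy c b
  have h2 : HasFDerivAt (fun y => iteratedFDeriv ℝ 2 f y ![c,b])
      ((ContinuousMultilinearMap.apply ℝ (fun _ : Fin 2 => E) ℝ ![b,c]).comp
        (fderiv ℝ (iteratedFDeriv ℝ 2 f) z)) z := h1.congr_of_eventuallyEq heq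
  have h3 := hasFDerivAt_D2_apply hQ hf hz c b
  have h4 := h3.unique h2
  have h5 := congrArg (fun L : E →L[ℝ] ℝ => L a) h4
  simp only [ContinuousLinearMap.coe_comp', Function.comp_apply,
    ContinuousMultilinearMap.apply_apply] at h5
  rw [D3_apply_left, D3_apply_left]
  exact h5.symm

omit [NormedAddCommGroup E] [NormedSpace ℝ E] in
lemma fin_init_cons (a b c : E) : Fin.init ![a,b,c] = ![a,b] := by
  funext i
  fin_cases i <;> rfl

lemma D3_eq_triple (f : E → ℝ) (z : E) (a b c : E) :
    iteratedFDeriv ℝ 3 f z ![a,b,c] = fderiv ℝ (fderiv ℝ (fderiv ℝ f)) z a b c := by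
  rw [iteratedFDeriv_succ_apply_right, fin_init_cons, iteratedFDeriv_two_apply]
  rfl

lemma D3_symm12 (hQ : IsOpen Q) (hf : ContDiffOn ℝ 3 f Q) {z : E} (hz : z ∈ Q) (a b c : E) :
    iteratedFDeriv ℝ 3 f z ![a,b,c] = iteratedFDeriv ℝ 3 f z ![b,a,c] := by
  have hat : ContDiffAt ℝ 3 f z := hf.contDiffAt (hQ.mem_nhds hz)
  have hg : ContDiffAt ℝ 2 (fderiv ℝ f) z := hat.fderiv_right (by norm_num)
  have hsym := hg.isSymmSndFDerivAt (by norm_num)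
  rw [D3_eq_triple, D3_eq_triple]
  exact congrArg (fun L : E →L[ℝ] ℝ => L c) (hsym.eq a b)

-- derivative along a line
lemma hasDerivAt_line (x d : E) (t : ℝ) : HasDerivAt (fun s : ℝ => x + s•d) d t := by
  have h1 : HasDerivAt (fun s : ℝ => s•d) ((1:ℝ)•d) t := (hasDerivAt_id t).smul_const d
  simpa using h1.const_add x

lemma hasDerivAt_D1 (hQ : IsOpen Q) (hf : ContDiffOn ℝ 3 f Q) (x d : E) {t : ℝ}
    (hmem : x + t•d ∈ Q) (w : E) :
    HasDerivAt (fun s : ℝ => fderiv ℝ f (x+s•d) w)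
      (iteratedFDeriv ℝ 2 f (x+t•d) ![d,w]) t := by
  have hat : ContDiffAt ℝ 3 f (x+t•d) := hf.contDiffAt (hQ.mem_nhds hmem)
  have hg : DifferentiableAt ℝ (fderiv ℝ f) (x+t•d) :=
    (hat.fderiv_right (m := 2) (by norm_num)).differentiableAt (by norm_num)
  have h1 : HasFDerivAt (fun y => fderiv ℝ f y w)
      ((ContinuousLinearMap.apply ℝ ℝ w).comp (fderiv ℝ (fderiv ℝ f) (x+t•d))) (x+t•d) :=
    (ContinuousLinearMap.apply ℝ ℝ w).hasFDerivAt.comp _ hg.hasFDerivAt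
  have h2 := h1.comp_hasDerivAt t (hasDerivAt_line x d t)
  refine h2.congr_deriv ?_
  rw [iteratedFDeriv_two_apply]
  rfl

lemma hasDerivAt_D2 (hQ : IsOpen Q) (hf : ContDiffOn ℝ 3 f Q) (x d : E) {t : ℝ}
    (hmem : x + t•d ∈ Q) (v w : E) :
    HasDerivAt (fun s : ℝ => iteratedFDeriv ℝ 2 f (x+s•d) ![v,w])
      (iteratedFDeriv ℝ 3 f (x+t•d) ![d,v,w]) t := by
  have h1 := hasFDerivAt_D2_apply hQ hf hmem v w
  have h2 := h1.comp_hasDerivAt t (hasDerivAt_line x d t)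
  exact h2.congr_deriv rfl

end CalcTools

section ODETools

open Set intervalIntegral

/-- Self-concordance ODE bound along the segment, diagonal version. -/
lemma ode1 (φ φ' : ℝ → ℝ) (r : ℝ)
    (hd : ∀ t ∈ Icc (0:ℝ) 1, HasDerivAt φ (φ' t) t)
    (hpos : ∀ t ∈ Icc (0:ℝ) 1, 0 < φ t)
    (hb : ∀ t ∈ Icc (0:ℝ) 1, φ' t ≤ 2 * (φ t) ^ ((3:ℝ)/2))
    (hr0 : Real.sqrt (φ 0) = r) (hr1 : r < 1) :
    ∀ t ∈ Icc (0:ℝ) 1, Real.sqrt (φ t) ≤ r / (1 - t*r) := by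
  have h01 : (0:ℝ) ∈ Icc (0:ℝ) 1 := ⟨le_refl 0, zero_le_one⟩
  have hrpos : 0 < r := by rw [← hr0]; exact Real.sqrt_pos.2 (hpos 0 h01)
  have hζd : ∀ t ∈ Icc (0:ℝ) 1, HasDerivAt (fun s => φ s ^ (-(1:ℝ)/2) + s)
      (φ' t * (-(1:ℝ)/2) * φ t ^ (-(1:ℝ)/2 - 1) + 1) t := by
    intro t ht
    exact (((hd t ht).rpow_const (Or.inl (hpos t ht).ne')).add (hasDerivAt_id t))
  have hmono : MonotoneOn (fun s => φ s ^ (-(1:ℝ)/2) + s) (Icc (0:ℝ) 1) := by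
    apply monotoneOn_of_deriv_nonneg (convex_Icc 0 1)
    · exact fun t ht => (hζd t ht).continuousAt.continuousWithinAt
    · intro t ht
      rw [interior_Icc] at ht
      exact (hζd t (Ioo_subset_Icc_self ht)).differentiableAt.differentiableWithinAt
    · intro t ht
      rw [interior_Icc] at ht
      have ht' : t ∈ Icc (0:ℝ) 1 := Ioo_subset_Icc_self ht
      rw [(hζd t ht').deriv]
      have hφp := hpos t ht'
      have hkey : φ t ^ (-(1:ℝ)/2 - 1) * φ' t ≤ 2 := by
        have h1 : φ t ^ (-(1:ℝ)/2 - 1) * φ' t ≤ φ t ^ (-(1:ℝ)/2 - 1) * (2 * φ t ^ ((3:ℝ)/2)) :=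
          mul_le_mul_of_nonneg_left (hb t ht') (Real.rpow_nonneg hφp.le _)
        have h2 : φ t ^ (-(1:ℝ)/2 - 1) * (2 * φ t ^ ((3:ℝ)/2)) = 2 := by
          rw [mul_comm, mul_assoc, ← Real.rpow_add hφp]
          norm_num
        linarith
      nlinarith [Real.rpow_nonneg hφp.le (-(1:ℝ)/2 - 1)]
  intro t ht
  have h := hmono h01 ht ht.1
  simp only [add_zero] at h
  have hrw : ∀ s ∈ Icc (0:ℝ) 1, φ s ^ (-(1:ℝ)/2) = (Real.sqrt (φ s))⁻¹ := by
    intro s hs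
    rw [show (-(1:ℝ)/2) = -(1/2 : ℝ) by norm_num, Real.rpow_neg (hpos s hs).le,
      ← Real.sqrt_eq_rpow]
  rw [hrw 0 h01, hrw t ht] at h
  have ha : 0 < Real.sqrt (φ 0) := Real.sqrt_pos.2 (hpos 0 h01)
  have hs : 0 < Real.sqrt (φ t) := Real.sqrt_pos.2 (hpos t ht)
  have h3 : Real.sqrt (φ 0) * Real.sqrt (φ t) * (Real.sqrt (φ 0))⁻¹ = Real.sqrt (φ t) := by
    field_simp
  have h4 : Real.sqrt (φ 0) * Real.sqrt (φ t) * (Real.sqrt (φ t))⁻¹ = Real.sqrt (φ 0) := by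
    field_simp
  have key : Real.sqrt (φ t) * (1 - t * Real.sqrt (φ 0)) ≤ Real.sqrt (φ 0) := by
    nlinarith [mul_le_mul_of_nonneg_left h (mul_pos ha hs).le, h3, h4]
  rw [hr0] at key
  have hden : 0 < 1 - t*r := by nlinarith [ht.1, ht.2]
  rw [le_div_iff₀ hden]
  exact key

/-- Grönwall-type bound. -/
lemma ode2 (ψ ψ' : ℝ → ℝ) (r : ℝ)
    (hd : ∀ t ∈ Icc (0:ℝ) 1, HasDerivAt ψ (ψ' t) t)
    (hpos : ∀ t ∈ Icc (0:ℝ) 1, 0 < ψ t)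
    (hr0 : 0 ≤ r) (hr1 : r < 1)
    (hb : ∀ t ∈ Icc (0:ℝ) 1, ψ' t ≤ 2 * (r / (1 - t*r)) * ψ t) :
    ∀ t ∈ Icc (0:ℝ) 1, ψ t ≤ ψ 0 / (1 - t*r)^2 := by
  have h01 : (0:ℝ) ∈ Icc (0:ℝ) 1 := ⟨le_refl 0, zero_le_one⟩
  have hden : ∀ t ∈ Icc (0:ℝ) 1, 0 < 1 - t*r := by
    intro t ht; nlinarith [ht.1, ht.2]
  have hlin : ∀ t : ℝ, HasDerivAt (fun s => 1 - s*r) (-r) t := by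
    intro t
    simpa using ((hasDerivAt_id' t).mul_const r).const_sub (1:ℝ)
  have hζd : ∀ t ∈ Icc (0:ℝ) 1, HasDerivAt (fun s => Real.log (ψ s) + 2 * Real.log (1 - s*r))
      (ψ' t / ψ t + 2 * (-r / (1 - t*r))) t := by
    intro t ht
    exact ((hd t ht).log (hpos t ht).ne').add (((hlin t).log (hden t ht).ne').const_mul 2)
  have hanti : AntitoneOn (fun s => Real.log (ψ s) + 2 * Real.log (1 - s*r)) (Icc (0:ℝ) 1) := by
    apply antitoneOn_of_deriv_nonpos (convex_Icc 0 1)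
    · exact fun t ht => (hζd t ht).continuousAt.continuousWithinAt
    · intro t ht
      rw [interior_Icc] at ht
      exact (hζd t (Ioo_subset_Icc_self ht)).differentiableAt.differentiableWithinAt
    · intro t ht
      rw [interior_Icc] at ht
      have ht' : t ∈ Icc (0:ℝ) 1 := Ioo_subset_Icc_self ht
      rw [(hζd t ht').deriv]
      have h1 : ψ' t / ψ t ≤ 2 * (r / (1 - t*r)) := by
        rw [div_le_iff₀ (hpos t ht')]
        exact hb t ht'
      have h2 : 2 * (-r / (1 - t*r)) = -(2 * (r / (1 - t*r))) := by ring
      linarith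
  intro t ht
  have h := hanti h01 ht ht.1
  simp only [zero_mul, sub_zero, Real.log_one, mul_zero, add_zero] at h
  have hlog : Real.log (ψ t * (1 - t*r)^2) ≤ Real.log (ψ 0) := by
    rw [Real.log_mul (hpos t ht).ne' (pow_ne_zero 2 (hden t ht).ne'), Real.log_pow]
    push_cast
    linarith
  have := (Real.log_le_log_iff (mul_pos (hpos t ht) (pow_pos (hden t ht) 2)) (hpos 0 h01)).1 hlog
  rw [le_div_iff₀ (pow_pos (hden t ht) 2)]
  linarith

/-- The explicit integral `∫₀¹ r/(1-tr)² dt = r/(1-r)`. -/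
lemma integral_rate (r : ℝ) (hr0 : 0 ≤ r) (hr1 : r < 1) :
    ∫ t in (0:ℝ)..1, r / (1 - t*r)^2 = r / (1 - r) := by
  have hden : ∀ t ∈ Set.Icc (0:ℝ) 1, 0 < 1 - t*r := by
    intro t ht; nlinarith [ht.1, ht.2]
  have hd : ∀ t ∈ Set.uIcc (0:ℝ) 1, HasDerivAt (fun s => (1 - s*r)⁻¹) (r / (1 - t*r)^2) t := by
    intro t ht
    rw [Set.uIcc_of_le zero_le_one] at ht
    have hlin : HasDerivAt (fun s => 1 - s*r) (-r) t := by
      simpa using ((hasDerivAt_id' t).mul_const r).const_sub (1:ℝ)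
    have := hlin.inv (hden t ht).ne'
    refine this.congr_deriv ?_
    rw [neg_neg]
  have hcont : ContinuousOn (fun t => r / (1 - t*r)^2) (Set.uIcc (0:ℝ) 1) := by
    rw [Set.uIcc_of_le zero_le_one]
    apply ContinuousOn.div continuousOn_const
    · fun_prop
    · intro t ht
      exact pow_ne_zero _ (hden t ht).ne'
  rw [intervalIntegral.integral_eq_sub_of_hasDerivAt hd (hcont.intervalIntegrable)]
  have h2 : (1:ℝ) - r ≠ 0 := by linarith
  have h3 : (1:ℝ) - 1*r = 1 - r := by ring
  rw [h3]
  field_simp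
  ring

end ODETools

section Dict

-- Cauchy-Schwarz for a PSD bilinear form
lemma cs_bound {V : Type*} [AddCommGroup V] [Module ℝ V] (B : V → V → ℝ)
    (hBa : ∀ u v w : V, B (u+v) w = B u w + B v w)
    (hBs : ∀ (a:ℝ) (u v : V), B (a•u) v = a * B u v)
    (hBsym : ∀ u v : V, B u v = B v u)
    (hBnn : ∀ v : V, 0 ≤ B v v)
    (d w : V) (hd : 0 < B d d) :
    |B d w| ≤ Real.sqrt (B d d) * Real.sqrt (B w w) := by
  have hBa2 : ∀ u v w : V, B u (v+w) = B u v + B u w := by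
    intro u v w; rw [hBsym, hBa, hBsym v, hBsym w]
  have hBs2 : ∀ (a:ℝ) (u v : V), B u (a•v) = a * B u v := by
    intro a u v; rw [hBsym, hBs, hBsym]
  have hv := hBnn ((B d d)•w + (-(B d w))•d)
  have hexp : B ((B d d)•w + (-(B d w))•d) ((B d d)•w + (-(B d w))•d)
      = B d d * (B d d * B w w - B d w * B d w) := by
    simp only [hBa, hBa2, hBs, hBs2, hBsym w d]
    ring
  rw [hexp] at hv
  have hkey : (B d w)^2 ≤ (B d d) * (B w w) := by nlinarith [hv, hd]
  calc |B d w| = Real.sqrt ((B d w)^2) := (Real.sqrt_sq_eq_abs _).symm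
    _ ≤ Real.sqrt (B d d * B w w) := Real.sqrt_le_sqrt hkey
    _ = Real.sqrt (B d d) * Real.sqrt (B w w) := Real.sqrt_mul (hBnn d) _

variable {m : ℕ}

lemma vec_decomp (v : Fin m → ℝ) : v = ∑ i, (v i) • (Pi.single i 1 : Fin m → ℝ) := by
  have h : ∀ i : Fin m, (v i) • (Pi.single i 1 : Fin m → ℝ) = (Pi.single i (v i) : Fin m → ℝ) := by
    intro i
    rw [← Pi.single_smul]
    simp
  rw [Finset.sum_congr rfl (fun i _ => h i), Finset.univ_sum_single]

lemma fderiv_expand (f : (Fin m → ℝ) → ℝ) (z : Fin m → ℝ) (w : Fin m → ℝ) :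
    fderiv ℝ f z w = ∑ i, w i * fderiv ℝ f z (Pi.single i 1) := by
  conv_lhs => rw [vec_decomp w]
  rw [map_sum]
  exact Finset.sum_congr rfl (fun i _ => by rw [(fderiv ℝ f z).map_smul]; rfl)

lemma vgrad_dict (f : (Fin m → ℝ) → ℝ) (z : Fin m → ℝ) (w : Fin m → ℝ) :
    vgrad f z ⬝ᵥ w = fderiv ℝ f z w := by
  rw [fderiv_expand, dotProduct]
  simp only [vgrad]
  exact Finset.sum_congr rfl (fun i _ => by ring)

lemma D2_sum1 (f : (Fin m → ℝ) → ℝ) (z : Fin m → ℝ) {α : Type*} (s : Finset α)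
    (g : α → (Fin m → ℝ)) (w : Fin m → ℝ) :
    iteratedFDeriv ℝ 2 f z ![∑ i ∈ s, g i, w] = ∑ i ∈ s, iteratedFDeriv ℝ 2 f z ![g i, w] :=
  map_sum (AddMonoidHom.mk' (fun x => iteratedFDeriv ℝ 2 f z ![x, w])
    (fun a b => D2_add1 f z a b w)) g s

lemma D2_expand (f : (Fin m → ℝ) → ℝ) (z : Fin m → ℝ) (v w : Fin m → ℝ) :
    iteratedFDeriv ℝ 2 f z ![v,w] = ∑ i, v i * iteratedFDeriv ℝ 2 f z ![Pi.single i 1, w] := by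
  conv_lhs => rw [vec_decomp v]
  rw [D2_sum1]
  exact Finset.sum_congr rfl (fun i _ => D2_smul1 f z (v i) (Pi.single i 1) w)

lemma D2_dict {Q : Set (Fin m → ℝ)} {f : (Fin m → ℝ) → ℝ}
    (hQ : IsOpen Q) (hf : ContDiffOn ℝ 3 f Q) {z : Fin m → ℝ} (hz : z ∈ Q)
    (v w : Fin m → ℝ) :
    iteratedFDeriv ℝ 2 f z ![v,w] = v ⬝ᵥ ((vhess f z) *ᵥ w) := by
  rw [D2_expand]
  have h1 : ∀ i : Fin m, iteratedFDeriv ℝ 2 f z ![Pi.single i 1, w]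
      = ∑ j, w j * iteratedFDeriv ℝ 2 f z ![Pi.single i 1, Pi.single j 1] := by
    intro i
    rw [D2_symm hQ hf hz, D2_expand]
    exact Finset.sum_congr rfl (fun j _ => by rw [D2_symm hQ hf hz])
  rw [Finset.sum_congr rfl (fun i _ => by rw [h1 i])]
  rw [dotProduct]
  refine Finset.sum_congr rfl (fun i _ => ?_)
  rw [Matrix.mulVec, dotProduct]
  rw [Finset.mul_sum, Finset.mul_sum]
  refine Finset.sum_congr rfl (fun j _ => ?_)
  simp only [vhess, Matrix.of_apply]
  ring

end Dict

/-- Gradient displacement bound for 1-self-concordant functions. -/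
theorem gradient_displacement_bound {m : ℕ} (Q : Set (Fin m → ℝ))
    (f : (Fin m → ℝ) → ℝ) (hf : IsSelfConcordant 1 Q f)
    (hnd : ∀ x ∈ Q, (vhess f x).PosDef)
    (x y : Fin m → ℝ) (hx : x ∈ Q) (hy : y ∈ Q)
    (r : ℝ) (hr : r = Bnorm (vhess f x) (x - y)) (hr1 : r < 1) :
    Bnorm (vhess f x)⁻¹ (vgrad f x - vgrad f y) ≤ r / (1 - r) := by
  obtain ⟨-, hQ, hconv, -, hsmooth, -, -, hsc⟩ := hf
  rw [Bnorm]
  set H := vhess f x with hHdef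
  set s := vgrad f x - vgrad f y with hsdef
  set w := H⁻¹ *ᵥ s with hwdef
  have hH : H.PosDef := hnd x hx
  have hr0 : 0 ≤ r := by rw [hr]; exact Real.sqrt_nonneg _
  have hden1 : 0 < 1 - r := by linarith
  have hdet : IsUnit H.det := isUnit_iff_ne_zero.2 hH.det_pos.ne'
  have hHs : H *ᵥ w = s := by
    rw [hwdef, Matrix.mulVec_mulVec, Matrix.mul_nonsing_inv H hdet, Matrix.one_mulVec]
  by_cases hw0 : w = 0
  · rw [hw0, zero_dotProduct, Real.sqrt_zero]
    exact div_nonneg hr0 hden1.le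
  -- main case
  have hs0 : s ≠ 0 := by
    intro h0
    exact hw0 (by rw [hwdef, h0, Matrix.mulVec_zero])
  have hxy : x ≠ y := by
    intro h
    apply hs0
    rw [hsdef, h, sub_self]
  set d := y - x with hddef
  have hd0 : d ≠ 0 := sub_ne_zero.2 (Ne.symm hxy)
  have hmem : ∀ t ∈ Set.Icc (0:ℝ) 1, x + t • d ∈ Q := fun t ht =>
    hconv.add_smul_sub_mem hx hy ⟨ht.1, ht.2⟩
  have hpd : ∀ z ∈ Q, ∀ v : Fin m → ℝ, v ≠ 0 → 0 < iteratedFDeriv ℝ 2 f z ![v,v] := by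
    intro z hz v hv
    rw [D2_dict hQ hsmooth hz]
    have := (hnd z hz).dotProduct_mulVec_pos hv
    simpa using this
  have hnn : ∀ z ∈ Q, ∀ v : Fin m → ℝ, 0 ≤ iteratedFDeriv ℝ 2 f z ![v,v] := by
    intro z hz v
    by_cases hv : v = 0
    · rw [hv]
      have h0 : iteratedFDeriv ℝ 2 f z ![(0:Fin m → ℝ), 0] = 0 := by
        have := D2_smul1 f z 0 0 0
        simpa using this
      rw [h0]
    · exact (hpd z hz v hv).le
  -- the scalar functions along the segment
  have hγ0 : x + (0:ℝ)•d = x := by simp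
  have hγ1 : x + (1:ℝ)•d = y := by rw [one_smul, hddef]; abel
  set φ : ℝ → ℝ := fun t => iteratedFDeriv ℝ 2 f (x + t•d) ![d,d] with hφdef
  set ψ : ℝ → ℝ := fun t => iteratedFDeriv ℝ 2 f (x + t•d) ![w,w] with hψdef
  set g : ℝ → ℝ := fun t => iteratedFDeriv ℝ 2 f (x + t•d) ![d,w] with hgdef
  have hφ0 : φ 0 = iteratedFDeriv ℝ 2 f x ![d,d] := by rw [hφdef]; simp
  have hψ0 : ψ 0 = iteratedFDeriv ℝ 2 f x ![w,w] := by rw [hψdef]; simp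
  -- r = sqrt (φ 0)
  have hrφ : Real.sqrt (φ 0) = r := by
    rw [hφ0, D2_dict hQ hsmooth hx, hr, Bnorm]
    congr 1
    have hxy' : x - y = -d := by rw [hddef]; abel
    rw [hxy', Matrix.mulVec_neg, neg_dotProduct, dotProduct_neg, neg_neg,
      dotProduct_comm]
  -- ODE 1 for φ
  have hφd : ∀ t ∈ Set.Icc (0:ℝ) 1, HasDerivAt φ (iteratedFDeriv ℝ 3 f (x+t•d) ![d,d,d]) t :=
    fun t ht => hasDerivAt_D2 hQ hsmooth x d (hmem t ht) d d
  have hφpos : ∀ t ∈ Set.Icc (0:ℝ) 1, 0 < φ t := fun t ht => hpd _ (hmem t ht) d hd0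
  have hφb : ∀ t ∈ Set.Icc (0:ℝ) 1,
      iteratedFDeriv ℝ 3 f (x+t•d) ![d,d,d] ≤ 2 * (φ t) ^ ((3:ℝ)/2) := by
    intro t ht
    have := hsc _ (hmem t ht) d
    rw [Real.one_rpow, mul_one] at this
    exact le_trans (le_abs_self _) this
  have hsq := ode1 φ (fun t => iteratedFDeriv ℝ 3 f (x+t•d) ![d,d,d]) r hφd hφpos hφb hrφ hr1
  -- ODE 2 for ψ
  have hψd : ∀ t ∈ Set.Icc (0:ℝ) 1, HasDerivAt ψ (iteratedFDeriv ℝ 3 f (x+t•d) ![d,w,w]) t :=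
    fun t ht => hasDerivAt_D2 hQ hsmooth x d (hmem t ht) w w
  have hψpos : ∀ t ∈ Set.Icc (0:ℝ) 1, 0 < ψ t := fun t ht => hpd _ (hmem t ht) w hw0
  have hψb : ∀ t ∈ Set.Icc (0:ℝ) 1,
      iteratedFDeriv ℝ 3 f (x+t•d) ![d,w,w] ≤ 2 * (r / (1 - t*r)) * ψ t := by
    intro t ht
    have hz := hmem t ht
    have hden : 0 < 1 - t*r := by nlinarith [ht.1, ht.2]
    have hmix : |iteratedFDeriv ℝ 3 f (x+t•d) ![d,w,w]|
        ≤ 2 * Real.sqrt (φ t) * ψ t := by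
      exact mixed_bound (fun u v => iteratedFDeriv ℝ 2 f (x+t•d) ![u,v])
        (fun a b c => iteratedFDeriv ℝ 3 f (x+t•d) ![a,b,c])
        (fun u v w' => D2_add1 f _ u v w')
        (fun a u v => D2_smul1 f _ a u v)
        (fun u v => D2_symm hQ hsmooth hz u v)
        (fun v hv => hpd _ hz v hv)
        (fun a a' b c => D3_add1 f _ a a' b c)
        (fun a x' y' z' => D3_smul1 f _ a x' y' z')
        (fun a b c => D3_symm12 hQ hsmooth hz a b c)
        (fun a b c => D3_symm23 hQ hsmooth hz a b c)
        (fun v => by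
          have := hsc _ hz v
          rwa [Real.one_rpow, mul_one] at this)
        d w
    have h1 : Real.sqrt (φ t) ≤ r / (1 - t*r) := hsq t ht
    have h2 : 2 * Real.sqrt (φ t) * ψ t ≤ 2 * (r / (1 - t*r)) * ψ t := by
      have := hψpos t ht
      nlinarith [Real.sqrt_nonneg (φ t)]
    exact le_trans (le_trans (le_abs_self _) hmix) h2
  have hψle := ode2 ψ (fun t => iteratedFDeriv ℝ 3 f (x+t•d) ![d,w,w]) r hψd hψpos hr0 hr1 hψb
  -- FTC for the pairing
  have hgd : ∀ t ∈ Set.uIcc (0:ℝ) 1, HasDerivAt (fun u : ℝ => fderiv ℝ f (x+u•d) w) (g t) t := by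
    intro t ht
    rw [Set.uIcc_of_le zero_le_one] at ht
    exact hasDerivAt_D1 hQ hsmooth x d (hmem t ht) w
  have hgcont : ContinuousOn g (Set.uIcc (0:ℝ) 1) := by
    intro t ht
    rw [Set.uIcc_of_le zero_le_one] at ht
    exact (hasDerivAt_D2 hQ hsmooth x d (hmem t ht) d w).continuousAt.continuousWithinAt
  have hFTC : ∫ t in (0:ℝ)..1, g t = fderiv ℝ f y w - fderiv ℝ f x w := by
    rw [intervalIntegral.integral_eq_sub_of_hasDerivAt hgd (hgcont.intervalIntegrable)]
    rw [show x + (1:ℝ)•d = y from hγ1, show x + (0:ℝ)•d = x from hγ0]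
  set ρ := Real.sqrt (ψ 0) with hρdef
  have hψ0s : ψ 0 = w ⬝ᵥ s := by
    rw [hψ0, D2_dict hQ hsmooth hx, hHs]
  have hρpos : 0 < ρ := Real.sqrt_pos.2 (by rw [hψ0]; exact hpd x hx w hw0)
  -- pointwise bound on |g|
  have hgb : ∀ t ∈ Set.Icc (0:ℝ) 1, |g t| ≤ ρ * (r / (1 - t*r)^2) := by
    intro t ht
    have hz := hmem t ht
    have hden : 0 < 1 - t*r := by nlinarith [ht.1, ht.2]
    have hcs : |g t| ≤ Real.sqrt (φ t) * Real.sqrt (ψ t) := by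
      exact cs_bound (fun u v => iteratedFDeriv ℝ 2 f (x+t•d) ![u,v])
        (fun u v w' => D2_add1 f _ u v w')
        (fun a u v => D2_smul1 f _ a u v)
        (fun u v => D2_symm hQ hsmooth hz u v)
        (fun v => hnn _ hz v)
        d w (hpd _ hz d hd0)
    have h1 : Real.sqrt (φ t) ≤ r / (1 - t*r) := hsq t ht
    have h2 : Real.sqrt (ψ t) ≤ ρ / (1 - t*r) := by
      have hle := hψle t ht
      have hle2 : ψ t ≤ (ρ / (1 - t*r))^2 := by
        rw [div_pow, hρdef, Real.sq_sqrt (by rw [hψ0]; exact hnn x hx w)]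
        exact hle
      calc Real.sqrt (ψ t) ≤ Real.sqrt ((ρ / (1 - t*r))^2) := Real.sqrt_le_sqrt hle2
        _ = ρ / (1 - t*r) := Real.sqrt_sq (by positivity)
    calc |g t| ≤ Real.sqrt (φ t) * Real.sqrt (ψ t) := hcs
      _ ≤ (r / (1 - t*r)) * (ρ / (1 - t*r)) := by
          have := Real.sqrt_nonneg (φ t)
          have := Real.sqrt_nonneg (ψ t)
          have hrr : 0 ≤ r / (1 - t*r) := div_nonneg hr0 hden.le
          exact mul_le_mul h1 h2 (Real.sqrt_nonneg _) hrr
      _ = ρ * (r / (1 - t*r)^2) := by field_simp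
  -- integral comparison
  have hMcont : ContinuousOn (fun t => ρ * (r / (1 - t*r)^2)) (Set.uIcc (0:ℝ) 1) := by
    rw [Set.uIcc_of_le zero_le_one]
    apply ContinuousOn.mul continuousOn_const
    apply ContinuousOn.div continuousOn_const
    · fun_prop
    · intro t ht
      have : 0 < 1 - t*r := by nlinarith [ht.1, ht.2]
      exact pow_ne_zero _ this.ne'
  have hint : |∫ t in (0:ℝ)..1, g t| ≤ ρ * (r / (1-r)) := by
    calc |∫ t in (0:ℝ)..1, g t| ≤ ∫ t in (0:ℝ)..1, |g t| :=
          intervalIntegral.abs_integral_le_integral_abs zero_le_one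
      _ ≤ ∫ t in (0:ℝ)..1, ρ * (r / (1 - t*r)^2) := by
          apply intervalIntegral.integral_mono_on zero_le_one
            (hgcont.abs.intervalIntegrable) (hMcont.intervalIntegrable)
          exact hgb
      _ = ρ * ∫ t in (0:ℝ)..1, r / (1 - t*r)^2 := intervalIntegral.integral_const_mul _ _
      _ = ρ * (r / (1-r)) := by rw [integral_rate r hr0 hr1]
  -- conclusion
  have hsw : s ⬝ᵥ w = -(∫ t in (0:ℝ)..1, g t) := by
    rw [hFTC, hsdef, sub_dotProduct, vgrad_dict, vgrad_dict]
    ring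
  have hρ2 : ρ^2 = s ⬝ᵥ w := by
    rw [hρdef, Real.sq_sqrt (by rw [hψ0]; exact hnn x hx w), hψ0s, dotProduct_comm]
  have hfinal : ρ^2 ≤ ρ * (r/(1-r)) := by
    rw [hρ2, hsw]
    refine le_trans (le_trans (le_abs_self _) ?_) hint
    rw [abs_neg]
  have hLHS : Real.sqrt (w ⬝ᵥ s) = ρ := by
    rw [hρdef, hψ0s]
  rw [hLHS]
  nlinarith [hρpos, hfinal]
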